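/- arXiv:2005.02735 — 2 statements merged into one kernel-verified Lean document; each statement's English description precedes it below -/
import Mathlib

section
/- Let $d \ge 3$. There exists a constant $C>0$ such that for any integer $r \ge 1$, any $\rho > 0$, and any finite subset $\Lambda \subseteq \mathbb{Z}^d$ satisfying $|\Lambda \cap Q(z,r)| \le \rho r^d$ for all $z \in r\mathbb{Z}^d$, one has $\sum_{z \in \Lambda \setminus Q(0,r)} \frac{1}{1+\|z\|^{d-2}} \le C \rho^{1 - 2/d} |\Lambda|^{2/d}$. -/
/-- Euclidean norm of a point of `ℤ^d`. -/
noncomputable def euclidNorm (d : ℕ) (z : Fin d → ℤ) : ℝ :=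
  Real.sqrt (∑ i, ((z i : ℝ)) ^ 2)

/-- `z` belongs to the discrete cube `Q(x,r) = [x - r/2, x + r/2)^d ∩ ℤ^d`. -/
def inCube (d : ℕ) (x : Fin d → ℤ) (r : ℝ) (z : Fin d → ℤ) : Prop :=
  ∀ i, (x i : ℝ) - r / 2 ≤ (z i : ℝ) ∧ (z i : ℝ) < (x i : ℝ) + r / 2

/-!
Every point outside `Q(0,r)` has norm at least `r/2`, so covering the ball of radius `s ≥ r/2` by
the lattice cubes `Q(rk, r)` shows that at most `8^d ρ s^d` of the summed points have norm below
`s`. For any finite family of positive numbers `n_z`, at most `v^d` of them, with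
`#{z | n_z < s} ≤ (u s)^d` for all `s`, one has `∑ n_z^{-p} ≤ (1 + 2^{p+1}) u^p v^{d-p}` when
`p < d`: split at `R = v/u`, bound the terms with `n_z ≥ R` by `R^{-p}` each, and the rest shell by
shell over `R/2^{j+1} ≤ n_z < R/2^j`, where the shell contributions form a geometric series.
Take `p = d - 2`, `u = 8 ρ^{1/d}` and `v = |Λ|^{1/d}`.
-/

open Finset Filter Topology

section Dyadic

variable {ι : Type*}

theorem inv_pow_le_add_sum_dyadic (p : ℕ) {x : ℝ} (K : ℕ) {R : ℝ} (hR : 0 < R)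
    (hRx : R / 2 ^ K ≤ x) :
    (x ^ p)⁻¹ ≤ (R ^ p)⁻¹ +
      2 ^ p * ∑ j ∈ range K, if x < R / 2 ^ j then ((R / 2 ^ j) ^ p)⁻¹ else 0 := by
  have hsum_nonneg : ∀ (K : ℕ) (R : ℝ), 0 < R →
      0 ≤ ∑ j ∈ range K, if x < R / 2 ^ j then ((R / 2 ^ j) ^ p)⁻¹ else 0 := fun K R hR =>
    sum_nonneg fun j _ => by split_ifs <;> positivity
  induction K generalizing R with
  | zero =>
    rw [pow_zero, div_one] at hRx
    simpa using inv_anti₀ (by positivity) (pow_le_pow_left₀ hR.le hRx p)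
  | succ K ih =>
    by_cases hxR : R ≤ x
    · have := inv_anti₀ (by positivity) (pow_le_pow_left₀ hR.le hxR p)
      have := mul_nonneg (pow_nonneg zero_le_two p) (hsum_nonneg (K + 1) R hR)
      linarith
    · have hhalf := ih (half_pos hR) (by rwa [div_div, ← pow_succ'])
      rw [sum_range_succ', pow_zero, div_one, if_pos (not_le.mp hxR)]
      simp only [pow_succ', ← div_div]
      rw [div_pow, inv_div, div_eq_mul_inv] at hhalf
      have : 0 ≤ (R ^ p)⁻¹ := by positivity
      linarith

theorem exists_forall_div_two_pow_le (S : Finset ι) {n : ι → ℝ} (hn : ∀ z ∈ S, 0 < n z) (R : ℝ) :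
    ∃ K : ℕ, ∀ z ∈ S, R / 2 ^ K ≤ n z := by
  have hlim : Tendsto (fun K : ℕ => R / 2 ^ K) atTop (𝓝 0) :=
    tendsto_const_nhds.div_atTop (tendsto_pow_atTop_atTop_of_one_lt one_lt_two)
  exact ((eventually_all_finset S).2 fun z hz => hlim.eventually (ge_mem_nhds (hn z hz))).exists

theorem sum_inv_pow_le_of_card_lt_le (S : Finset ι) (n : ι → ℝ) {p q : ℕ} (hpq : p < q)
    {A : ℝ} (hn : ∀ z ∈ S, 0 < n z) (hA : ∀ s > 0, (#{z ∈ S | n z < s} : ℝ) ≤ A * s ^ q)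
    {R : ℝ} (hR : 0 < R) :
    ∑ z ∈ S, (n z ^ p)⁻¹ ≤ #S / R ^ p + 2 ^ (p + 1) * A * R ^ (q - p) := by
  have hA0 : 0 ≤ A := by simpa using (Nat.cast_nonneg _).trans (hA 1 one_pos)
  obtain ⟨K, hK⟩ := exists_forall_div_two_pow_le S hn R
  have hshell : ∀ j : ℕ, (#{z ∈ S | n z < R / 2 ^ j} : ℝ) * ((R / 2 ^ j) ^ p)⁻¹ ≤
      A * R ^ (q - p) * (1 / 2) ^ j := by
    intro j
    have ht : 0 < R / 2 ^ j := by positivity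
    calc (#{z ∈ S | n z < R / 2 ^ j} : ℝ) * ((R / 2 ^ j) ^ p)⁻¹
        ≤ A * (R / 2 ^ j) ^ q * ((R / 2 ^ j) ^ p)⁻¹ := by gcongr; exact hA _ ht
      _ = A * R ^ (q - p) * ((1 / 2) ^ j) ^ (q - p) := by
        rw [mul_assoc, ← pow_sub₀ _ ht.ne' hpq.le, one_div, inv_pow, div_eq_mul_inv, mul_pow,
          mul_assoc]
      _ ≤ A * R ^ (q - p) * (1 / 2) ^ j := by
        gcongr
        exact pow_le_of_le_one (by positivity) (pow_le_one₀ (by norm_num) (by norm_num))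
          (Nat.sub_ne_zero_of_lt hpq)
  calc ∑ z ∈ S, (n z ^ p)⁻¹
      ≤ ∑ z ∈ S, ((R ^ p)⁻¹ +
          2 ^ p * ∑ j ∈ range K, if n z < R / 2 ^ j then ((R / 2 ^ j) ^ p)⁻¹ else 0) :=
        sum_le_sum fun z hz => inv_pow_le_add_sum_dyadic p K hR (hK z hz)
    _ = #S / R ^ p +
          2 ^ p * ∑ j ∈ range K, (#{z ∈ S | n z < R / 2 ^ j} : ℝ) * ((R / 2 ^ j) ^ p)⁻¹ := by
        rw [sum_add_distrib, sum_const, nsmul_eq_mul, ← mul_sum, sum_comm, div_eq_mul_inv]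
        simp only [sum_ite, sum_const_zero, add_zero, sum_const, nsmul_eq_mul]
    _ ≤ #S / R ^ p + 2 ^ p * ∑ j ∈ range K, A * R ^ (q - p) * (1 / 2) ^ j := by
        gcongr _ + 2 ^ p * ?_
        exact sum_le_sum fun j _ => hshell j
    _ ≤ #S / R ^ p + 2 ^ (p + 1) * A * R ^ (q - p) := by
        rw [← mul_sum, pow_succ]
        have := mul_le_mul_of_nonneg_left (sum_geometric_two_le K)
          (by positivity : (0 : ℝ) ≤ 2 ^ p * (A * R ^ (q - p)))
        linarith

theorem sum_inv_pow_le (S : Finset ι) (n : ι → ℝ) {p q : ℕ} (hpq : p < q) {u v : ℝ}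
    (hu : 0 < u) (hv : 0 ≤ v) (hn : ∀ z ∈ S, 0 < n z)
    (hcount : ∀ s > 0, (#{z ∈ S | n z < s} : ℝ) ≤ (u * s) ^ q) (hS : (#S : ℝ) ≤ v ^ q) :
    ∑ z ∈ S, (n z ^ p)⁻¹ ≤ (1 + 2 ^ (p + 1)) * u ^ p * v ^ (q - p) := by
  rcases hv.eq_or_lt with rfl | hv
  · have : S = ∅ := by
      rw [zero_pow (by omega)] at hS
      exact card_eq_zero.mp (by exact_mod_cast hS.antisymm (Nat.cast_nonneg _))
    rw [this, sum_empty]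
    positivity
  have hA : ∀ s > 0, (#{z ∈ S | n z < s} : ℝ) ≤ u ^ q * s ^ q := fun s hs =>
    (hcount s hs).trans_eq (mul_pow u s q)
  refine (sum_inv_pow_le_of_card_lt_le S n hpq hn hA (div_pos hv hu)).trans ?_
  obtain ⟨m, rfl⟩ := Nat.exists_eq_add_of_le hpq.le
  rw [Nat.add_sub_cancel_left]
  have hfar : (#S : ℝ) / (v / u) ^ p ≤ u ^ p * v ^ m := by
    rw [div_pow, div_div_eq_mul_div, div_le_iff₀ (by positivity)]
    calc (#S : ℝ) * u ^ p ≤ v ^ (p + m) * u ^ p := by gcongr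
      _ = u ^ p * v ^ m * v ^ p := by ring
  have hnear : u ^ (p + m) * (v / u) ^ m = u ^ p * v ^ m := by
    rw [div_pow, pow_add]
    field_simp
  rw [mul_assoc (2 ^ (p + 1) : ℝ), hnear]
  linarith

end Dyadic

section Lattice

open scoped Classical

variable {d : ℕ}

theorem abs_le_euclidNorm (z : Fin d → ℤ) (i : Fin d) : |(z i : ℝ)| ≤ euclidNorm d z := by
  rw [← Real.sqrt_sq_eq_abs]
  exact Real.sqrt_le_sqrt (single_le_sum (fun j _ => sq_nonneg (z j : ℝ)) (mem_univ i))

theorem half_le_euclidNorm_of_not_inCube {r : ℝ} {z : Fin d → ℤ} (hz : ¬ inCube d 0 r z) :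
    r / 2 ≤ euclidNorm d z := by
  simp only [inCube, Pi.zero_apply, Int.cast_zero, zero_sub, zero_add, not_forall,
    not_and_or, not_le, not_lt] at hz
  obtain ⟨i, hi⟩ := hz
  refine le_trans ?_ (abs_le_euclidNorm z i)
  rcases hi with hi | hi
  · linarith [neg_abs_le (z i : ℝ)]
  · linarith [le_abs_self (z i : ℝ)]

theorem inCube_round {r : ℕ} (hr : 0 < r) (z : Fin d → ℤ) :
    inCube d (fun i => r * ((2 * z i + r) / (2 * r))) r z := by
  intro i
  have h2r : (0 : ℤ) < 2 * r := by omega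
  have hlo := Int.ediv_mul_le (2 * z i + r) h2r.ne'
  have hhi := Int.lt_ediv_add_one_mul_self (2 * z i + r) h2r
  set k := (2 * z i + r) / (2 * r)
  have hlo' : (k : ℝ) * (2 * r) ≤ 2 * z i + r := by exact_mod_cast hlo
  have hhi' : (2 * z i + r : ℝ) < (k + 1) * (2 * r) := by exact_mod_cast hhi
  push_cast
  constructor <;> linarith

variable {Λ : Finset (Fin d → ℤ)} {r : ℕ} {ρ : ℝ}

theorem card_filter_euclidNorm_lt_le (hr : 0 < r)
    (hΛ : ∀ z : Fin d → ℤ, (∀ i, (r : ℤ) ∣ z i) →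
      ((Λ.filter (inCube d z r)).card : ℝ) ≤ ρ * (r : ℝ) ^ d) (s : ℝ) :
    (#{z ∈ Λ | euclidNorm d z < s} : ℝ) ≤ (2 * ⌈s / r⌉₊ + 1) ^ d * (ρ * r ^ d) := by
  set K := ⌈s / r⌉₊
  set box : Finset (Fin d → ℤ) := Fintype.piFinset fun _ => Icc (-(K : ℤ)) K
  have hrR : (0 : ℝ) < r := by exact_mod_cast hr
  have hcover : {z ∈ Λ | euclidNorm d z < s} ⊆
      box.biUnion fun c => Λ.filter (inCube d (fun i => r * c i) r) := by
    intro z hz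
    rw [mem_filter] at hz
    refine mem_biUnion.2
      ⟨fun i => (2 * z i + r) / (2 * r), ?_, mem_filter.2 ⟨hz.1, inCube_round hr z⟩⟩
    refine Fintype.mem_piFinset.2 fun i => mem_Icc.2 ?_
    obtain ⟨hlo, hhi⟩ := inCube_round hr z i
    have hzs := abs_lt.1 ((abs_le_euclidNorm z i).trans_lt hz.2)
    have hK : s / r ≤ K := Nat.le_ceil _
    rw [div_le_iff₀ hrR] at hK
    set k := (2 * z i + r) / (2 * r)
    push_cast at hlo hhi
    have h1 : (-(K : ℝ) - 1) * r < k * r := by nlinarith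
    have h2 : (k : ℝ) * r < (K + 1) * r := by nlinarith
    have h1' : -(K : ℤ) - 1 < k := by exact_mod_cast lt_of_mul_lt_mul_right h1 hrR.le
    have h2' : k < (K : ℤ) + 1 := by exact_mod_cast lt_of_mul_lt_mul_right h2 hrR.le
    omega
  have hbox : #box = (2 * K + 1) ^ d := by
    simp only [box, Fintype.card_piFinset, Int.card_Icc, prod_const, card_univ, Fintype.card_fin]
    congr
    omega
  calc (#{z ∈ Λ | euclidNorm d z < s} : ℝ)
      ≤ #(box.biUnion fun c => Λ.filter (inCube d (fun i => r * c i) r)) := by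
        exact_mod_cast card_le_card hcover
    _ ≤ ∑ c ∈ box, (#(Λ.filter (inCube d (fun i => r * c i) r)) : ℝ) := by
        exact_mod_cast card_biUnion_le
    _ ≤ ∑ c ∈ box, ρ * (r : ℝ) ^ d :=
        sum_le_sum fun c _ => hΛ _ fun i => dvd_mul_right _ _
    _ = (2 * K + 1) ^ d * (ρ * r ^ d) := by
        rw [sum_const, hbox, nsmul_eq_mul]
        push_cast
        ring

theorem card_filter_not_inCube_euclidNorm_lt_le (hr : 0 < r) (hρ : 0 ≤ ρ)
    (hΛ : ∀ z : Fin d → ℤ, (∀ i, (r : ℤ) ∣ z i) →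
      ((Λ.filter (inCube d z r)).card : ℝ) ≤ ρ * (r : ℝ) ^ d) {s : ℝ} (hs : 0 ≤ s) :
    (#{z ∈ Λ.filter (fun z => ¬ inCube d 0 r z) | euclidNorm d z < s} : ℝ) ≤ 8 ^ d * ρ * s ^ d := by
  by_cases hrs : r / 2 ≤ s
  · have hrR : (0 : ℝ) < r := by exact_mod_cast hr
    have hK : (2 * ⌈s / r⌉₊ + 1 : ℝ) ≤ 8 * s / r := by
      have hceil := mul_lt_mul_of_pos_right (Nat.ceil_lt_add_one (div_nonneg hs hrR.le)) hrR
      rw [add_mul, div_mul_cancel₀ _ hrR.ne', one_mul] at hceil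
      rw [le_div_iff₀ hrR]
      linarith
    calc (#{z ∈ Λ.filter (fun z => ¬ inCube d 0 r z) | euclidNorm d z < s} : ℝ)
        ≤ #{z ∈ Λ | euclidNorm d z < s} := by
          exact_mod_cast card_le_card (filter_subset_filter _ (filter_subset _ _))
      _ ≤ (2 * ⌈s / r⌉₊ + 1) ^ d * (ρ * r ^ d) := card_filter_euclidNorm_lt_le hr hΛ s
      _ ≤ (8 * s / r) ^ d * (ρ * r ^ d) := by gcongr
      _ = 8 ^ d * ρ * s ^ d := by
          rw [div_pow, mul_pow]
          field_simp
  · have hempty : {z ∈ Λ.filter (fun z => ¬ inCube d 0 r z) | euclidNorm d z < s} = ∅ :=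
      filter_eq_empty_iff.2 fun z hz =>
        not_lt.2 ((not_le.1 hrs).le.trans (half_le_euclidNorm_of_not_inCube (mem_filter.1 hz).2))
    rw [hempty, card_empty, Nat.cast_zero]
    positivity

end Lattice

open scoped Classical in
theorem stmt_4 (d : ℕ) (hd : 3 ≤ d) :
    ∃ C > 0, ∀ r : ℕ, 1 ≤ r → ∀ ρ : ℝ, 0 < ρ → ∀ Λ : Finset (Fin d → ℤ),
      (∀ z : Fin d → ℤ, (∀ i, (r : ℤ) ∣ z i) →
        ((Λ.filter (inCube d z r)).card : ℝ) ≤ ρ * (r : ℝ) ^ d) →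
      ∑ z ∈ Λ.filter (fun z => ¬ inCube d 0 (r : ℝ) z),
          1 / (1 + euclidNorm d z ^ (d - 2))
        ≤ C * ρ ^ (1 - 2 / (d : ℝ)) * (Λ.card : ℝ) ^ (2 / (d : ℝ)) := by
  refine ⟨(1 + 2 ^ (d - 1)) * 8 ^ (d - 2), by positivity, fun r hr ρ hρ Λ hΛ => ?_⟩
  have hn : ∀ z ∈ Λ.filter (fun z => ¬ inCube d 0 (r : ℝ) z), 0 < euclidNorm d z :=
    fun z hz =>
      lt_of_lt_of_le (by positivity) (half_le_euclidNorm_of_not_inCube (mem_filter.1 hz).2)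
  have hu_pow : (8 * ρ ^ (d : ℝ)⁻¹) ^ d = 8 ^ d * ρ := by
    rw [mul_pow, Real.rpow_inv_natCast_pow hρ.le (by omega)]
  have key := sum_inv_pow_le _ (euclidNorm d) (p := d - 2) (q := d) (by omega)
    (by positivity : 0 < 8 * ρ ^ (d : ℝ)⁻¹) (by positivity : 0 ≤ (#Λ : ℝ) ^ (d : ℝ)⁻¹) hn
    (fun s hs => by
      rw [mul_pow, hu_pow]
      exact card_filter_not_inCube_euclidNorm_lt_le hr hρ.le hΛ hs.le)
    (by
      rw [Real.rpow_inv_natCast_pow (Nat.cast_nonneg _) (by omega)]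
      exact_mod_cast card_filter_le _ _)
  calc ∑ z ∈ Λ.filter (fun z => ¬ inCube d 0 (r : ℝ) z), 1 / (1 + euclidNorm d z ^ (d - 2))
      ≤ ∑ z ∈ Λ.filter (fun z => ¬ inCube d 0 (r : ℝ) z), (euclidNorm d z ^ (d - 2))⁻¹ :=
        sum_le_sum fun z hz => by
          rw [one_div]
          exact inv_anti₀ (pow_pos (hn z hz) _) (le_add_of_nonneg_left zero_le_one)
    _ ≤ _ := key
    _ = _ := by
      rw [Nat.sub_sub_self (by omega), show d - 2 + 1 = d - 1 by omega, mul_pow,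
        ← Real.rpow_mul_natCast hρ.le, ← Real.rpow_mul_natCast (Nat.cast_nonneg _),
        Nat.cast_sub (by omega), Nat.cast_ofNat]
      field_simp
end

section
/- Let $q \in (0,1]$, $\alpha = 1 - 2^{-(1-q)}$, and suppose $t_1, \dots, t_k > 0$ with $k \ge 2$. Assume the inequality $t_1^q + \cdots + t_{k-1}^q \ge (t_1 + \cdots + t_{k-1})^q + \alpha((k-2)\min_{i \le k-1} t_i)^q$ holds. Then $t_1^q + \cdots + t_k^q \ge (t_1 + \cdots + t_k)^q + \alpha\big(\min(t_k, \textstyle\sum_{i<k} t_i)^q + ((k-2)\min_{i \le k-1} t_i)^q\big) \ge (t_1 + \cdots + t_k)^q + \alpha((k-1)\min_{i \le k} t_i)^q$. -/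
/-!
Concavity of `f x = x ^ q` on `[0, ∞)` makes its increments `f (y + d) - f y` decrease in `y`;
for `a ≤ b` this gives `(a + b) ^ q ≤ b ^ q + (2 ^ q - 1) * a ^ q`, and `2 ^ q - 1 ≤ 2 ^ (q - 1)`.
Applied to `t k` and `∑ i < k, t i` and added to the induction hypothesis, this is the first
inequality. For the second, `m = min_{i ≤ k} t i` lies below both minima, and subadditivity of
`f` gives `((k - 1) * m) ^ q ≤ m ^ q + ((k - 2) * m) ^ q`.
-/

open Finset

lemma ConcaveOn.map_add_map_add_le {s : Set ℝ} {f : ℝ → ℝ} (hf : ConcaveOn ℝ s f) {x y d : ℝ}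
    (hx : x ∈ s) (hyd : y + d ∈ s) (hxy : x ≤ y) (hd : 0 ≤ d) :
    f x + f (y + d) ≤ f (x + d) + f y := by
  rcases (add_nonneg (sub_nonneg.2 hxy) hd).eq_or_lt with h | h
  · obtain rfl : d = 0 := by linarith
    obtain rfl : y = x := by linarith
    simp
  -- `x + d` and `y` are the convex combinations of `x` and `y + d` with swapped weights
  set θ := d / (y - x + d)
  have hθ0 : 0 ≤ θ := div_nonneg hd h.le
  have hθ1 : θ ≤ 1 := div_le_one_of_le₀ (by linarith) h.le
  have hxd := hf.2 hx hyd (sub_nonneg.2 hθ1) hθ0 (by ring)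
  have hy := hf.2 hx hyd hθ0 (sub_nonneg.2 hθ1) (by ring)
  have hθd : θ * (y - x + d) = d := div_mul_cancel₀ d h.ne'
  simp only [smul_eq_mul] at hxd hy
  rw [show (1 - θ) * x + θ * (y + d) = x + d by linear_combination hθd] at hxd
  rw [show θ * x + (1 - θ) * (y + d) = y by linear_combination -hθd] at hy
  linarith

lemma Real.rpow_add_add_rpow_le {q a b : ℝ} (hq0 : 0 ≤ q) (hq1 : q ≤ 1) (ha : 0 ≤ a)
    (hab : a ≤ b) : (a + b) ^ q + a ^ q ≤ (2 * a) ^ q + b ^ q := by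
  have := (Real.concaveOn_rpow hq0 hq1).map_add_map_add_le ha
    (add_nonneg (ha.trans hab) ha) hab ha
  rw [two_mul, add_comm a b]
  linarith

lemma Real.rpow_add_add_mul_min_rpow_le {q a b : ℝ} (hq0 : 0 ≤ q) (hq1 : q ≤ 1) (ha : 0 ≤ a)
    (hb : 0 ≤ b) : (a + b) ^ q + (1 - 1 / 2 ^ (1 - q)) * min a b ^ q ≤ a ^ q + b ^ q := by
  wlog hab : a ≤ b generalizing a b
  · simpa only [min_comm, add_comm] using this hb ha (le_of_not_ge hab)
  have h := Real.rpow_add_add_rpow_le hq0 hq1 ha hab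
  have h2 : 1 / (2 : ℝ) ^ (1 - q) = 2 ^ q / 2 := by
    rw [Real.rpow_sub two_pos, Real.rpow_one, one_div_div]
  have h2q : (2 : ℝ) ^ q ≤ 2 := by
    simpa using Real.rpow_le_rpow_of_exponent_le one_le_two hq1
  rw [Real.mul_rpow zero_le_two ha] at h
  rw [min_eq_left hab, h2]
  linarith [mul_le_mul_of_nonneg_right h2q (Real.rpow_nonneg ha q)]

lemma Real.rpow_add_one_mul_le {q c u x y : ℝ} (hq0 : 0 ≤ q) (hq1 : q ≤ 1) (hc : 0 ≤ c)
    (hu : 0 ≤ u) (hux : u ≤ x) (huy : u ≤ y) : ((c + 1) * u) ^ q ≤ x ^ q + (c * y) ^ q :=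
  calc ((c + 1) * u) ^ q = (u + c * u) ^ q := by ring_nf
    _ ≤ u ^ q + (c * u) ^ q := Real.rpow_add_le_add_rpow hu (mul_nonneg hc hu) hq0 hq1
    _ ≤ x ^ q + (c * y) ^ q := by gcongr

lemma Finset.sum_Icc_eq_sum_Icc_sub_one_add {M : Type*} [AddCommMonoid M] (f : ℕ → M)
    {a k : ℕ} (ha : a ≤ k) (hk : 1 ≤ k) : ∑ i ∈ Icc a k, f i = ∑ i ∈ Icc a (k - 1), f i + f k := by
  obtain ⟨n, rfl⟩ := Nat.exists_eq_add_of_le' hk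
  exact Finset.sum_Icc_succ_top ha f

theorem stmt_14 (q : ℝ) (hq0 : 0 < q) (hq1 : q ≤ 1) (α : ℝ)
    (hα : α = 1 - 1 / 2 ^ (1 - q)) (k : ℕ) (hk : 2 ≤ k) (t : ℕ → ℝ)
    (ht : ∀ i, 1 ≤ i → i ≤ k → 0 < t i)
    (hind : ∑ i ∈ Finset.Icc 1 (k - 1), t i ^ q ≥
      (∑ i ∈ Finset.Icc 1 (k - 1), t i) ^ q +
        α * (((k : ℝ) - 2) *
          (Finset.Icc 1 (k - 1)).inf' (Finset.nonempty_Icc.mpr (by omega)) t) ^ q) :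
    (∑ i ∈ Finset.Icc 1 k, t i ^ q ≥
      (∑ i ∈ Finset.Icc 1 k, t i) ^ q +
        α * ((min (t k) (∑ i ∈ Finset.Icc 1 (k - 1), t i)) ^ q +
          (((k : ℝ) - 2) *
            (Finset.Icc 1 (k - 1)).inf' (Finset.nonempty_Icc.mpr (by omega)) t) ^ q))
    ∧
    ((∑ i ∈ Finset.Icc 1 k, t i) ^ q +
        α * ((min (t k) (∑ i ∈ Finset.Icc 1 (k - 1), t i)) ^ q +
          (((k : ℝ) - 2) *
            (Finset.Icc 1 (k - 1)).inf' (Finset.nonempty_Icc.mpr (by omega)) t) ^ q)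
      ≥ (∑ i ∈ Finset.Icc 1 k, t i) ^ q +
          α * (((k : ℝ) - 1) *
            (Finset.Icc 1 k).inf' (Finset.nonempty_Icc.mpr (by omega)) t) ^ q) := by
  set m := (Icc 1 (k - 1)).inf' (nonempty_Icc.mpr (by omega)) t
  set m' := (Icc 1 k).inf' (nonempty_Icc.mpr (by omega)) t
  have hα0 : 0 ≤ α := by
    rw [hα, sub_nonneg, div_le_one (by positivity)]
    exact Real.one_le_rpow one_le_two (by linarith)
  have hk2 : (0 : ℝ) ≤ k - 2 := by
    rw [sub_nonneg]
    exact_mod_cast hk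
  have htk : 0 < t k := ht k (by omega) le_rfl
  have hpos : ∀ i ∈ Icc 1 (k - 1), 0 ≤ t i := fun i hi =>
    (ht i (mem_Icc.1 hi).1 ((mem_Icc.1 hi).2.trans (Nat.sub_le k 1))).le
  have hS : 0 ≤ ∑ i ∈ Icc 1 (k - 1), t i := sum_nonneg hpos
  have hm' : 0 < m' := (lt_inf'_iff _).2 fun i hi => ht i (mem_Icc.1 hi).1 (mem_Icc.1 hi).2
  have hm'm : m' ≤ m := inf'_mono t (Icc_subset_Icc_right (by omega)) _
  have hm'tk : m' ≤ t k := inf'_le t (mem_Icc.2 ⟨by omega, le_rfl⟩)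
  have hmS : m ≤ ∑ i ∈ Icc 1 (k - 1), t i := by
    calc m ≤ t 1 := inf'_le t (mem_Icc.2 ⟨le_rfl, by omega⟩)
      _ ≤ _ := single_le_sum hpos (mem_Icc.2 ⟨le_rfl, by omega⟩)
  refine ⟨?_, ?_⟩
  · rw [sum_Icc_eq_sum_Icc_sub_one_add t (by omega) (by omega),
      sum_Icc_eq_sum_Icc_sub_one_add (t · ^ q) (by omega) (by omega)]
    have := Real.rpow_add_add_mul_min_rpow_le hq0.le hq1 hS htk.le
    rw [← hα, min_comm] at this
    linarith
  · gcongr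
    rw [show (k - 1 : ℝ) = (k - 2) + 1 by ring]
    exact Real.rpow_add_one_mul_le hq0.le hq1 hk2 hm'.le (le_min hm'tk (hm'm.trans hmS)) hm'm
end
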